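/- arXiv:2202.02700 — 2 statements merged into one kernel-verified Lean document; each statement's English description precedes it below -/
import Mathlib

section
/- Let g ⊂ so(V) be a Lie subalgebra, R: g → g self-adjoint with eigenvalues μ₁ ≤ … ≤ μ_{dim g}, and T ∈ ⊗ʳV*_ℂ. Suppose there is C ≥ 1 such that |LT|² ≤ (1/C)|T^g|²|L|² for all L ∈ g. Let 1 ≤ ℓ ≤ ⌊C⌋ be an integer and κ ≤ 0. If μ₁ + … + μ_ℓ + (C − ℓ)μ_{ℓ+1} ≥ κ(ℓ+1), then g(R(T^g), conj(T^g)) ≥ (κ(ℓ+1)/C)|T^g|². -/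
open Finset

/-! If each weight `fᵢ ≥ 0` carries at most the fraction `1/C` of the total mass `S`, then
the weighted sum `∑ μᵢ fᵢ` of increasing values `μ` is smallest when the mass is pushed onto
the smallest values: the first `ℓ` of them get `S/C` each and the rest, `(C - ℓ) S/C`, sits on
`μ_{ℓ+1}`. Termwise, `μᵢ fᵢ ≥ μᵢ S/C + μ_{ℓ+1} (fᵢ - S/C)` for `i ≤ ℓ` and
`μᵢ fᵢ ≥ μ_{ℓ+1} fᵢ` for `i > ℓ`; summing gives `∑ μᵢ fᵢ ≥ (μ₁ + … + μ_ℓ + (C - ℓ) μ_{ℓ+1}) S/C`. -/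

theorem le_sum_mul_of_threshold {ι : Type*} [Fintype ι] [DecidableEq ι] (s : Finset ι)
    (μ f : ι → ℝ) (c M : ℝ) (hs : ∀ i ∈ s, μ i ≤ M ∧ f i ≤ c)
    (hsc : ∀ i ∉ s, M ≤ μ i ∧ 0 ≤ f i) :
    (∑ i ∈ s, μ i) * c + M * (∑ i, f i - #s * c) ≤ ∑ i, μ i * f i := by
  have hlhs : (∑ i ∈ s, μ i) * c + M * (∑ i, f i - #s * c)
      = ∑ i ∈ s, (μ i * c + M * (f i - c)) + ∑ i ∈ sᶜ, M * f i := by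
    rw [← sum_add_sum_compl s f, sum_add_distrib, ← sum_mul, ← mul_sum, ← mul_sum,
      sum_sub_distrib, sum_const, nsmul_eq_mul]
    ring
  rw [hlhs, ← sum_add_sum_compl s]
  refine add_le_add (sum_le_sum fun i hi => ?_) (sum_le_sum fun i hi => ?_)
  · obtain ⟨hμ, hf⟩ := hs i hi
    nlinarith [mul_nonneg (sub_nonneg.2 hμ) (sub_nonneg.2 hf)]
  · obtain ⟨hμ, hf⟩ := hsc i (mem_compl.mp hi)
    exact mul_le_mul_of_nonneg_right hμ hf

theorem sum_Iio_add_mul_le_sum_mul {N : ℕ} (μ f : Fin N → ℝ) (hμ : Monotone μ) (C : ℝ)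
    (hC : 0 < C) (hf0 : ∀ i, 0 ≤ f i) (hf : ∀ i, f i ≤ (∑ j, f j) / C) (k : Fin N) :
    ((∑ i ∈ Iio k, μ i) + (C - k) * μ k) * ((∑ j, f j) / C) ≤ ∑ i, μ i * f i := by
  have h := le_sum_mul_of_threshold (Iio k) μ f ((∑ j, f j) / C) (μ k)
    (fun i hi => ⟨hμ (mem_Iio.mp hi).le, hf i⟩)
    (fun i hi => ⟨hμ (not_lt.mp (mt mem_Iio.mpr hi)), hf0 i⟩)
  rw [Fin.card_Iio] at h
  convert h using 1
  field_simp

theorem stmt_3_general {G W : Type*} [NormedAddCommGroup G] [InnerProductSpace ℝ G]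
    [NormedAddCommGroup W] [InnerProductSpace ℂ W]
    {N : ℕ} (b : OrthonormalBasis (Fin N) ℝ G)
    (μ : Fin N → ℝ) (hμmono : Monotone μ)
    (A : G →ₗ[ℝ] W)
    (C : ℝ) (hC : 1 ≤ C)
    (hest : ∀ L : G, ‖A L‖ ^ 2 ≤ (1 / C) * (∑ α, ‖A (b α)‖ ^ 2) * ‖L‖ ^ 2)
    (ℓ : ℕ)
    (hℓN : ℓ < N)
    (κ : ℝ)
    (hsum : (∑ α ∈ Finset.univ.filter (fun α : Fin N => (α : ℕ) < ℓ), μ α)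
              + (C - ℓ) * μ ⟨ℓ, hℓN⟩ ≥ κ * (ℓ + 1)) :
    (∑ α, μ α * ‖A (b α)‖ ^ 2) ≥ (κ * (ℓ + 1) / C) * ∑ α, ‖A (b α)‖ ^ 2 := by
  have hC0 : 0 < C := one_pos.trans_le hC
  have hbasis : ∀ α, ‖A (b α)‖ ^ 2 ≤ (∑ β, ‖A (b β)‖ ^ 2) / C := fun α => by
    simpa [b.orthonormal.1 α, div_eq_inv_mul] using hest (b α)
  have hfilter : univ.filter (fun α : Fin N => (α : ℕ) < ℓ) = Iio ⟨ℓ, hℓN⟩ := by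
    ext α
    simp [Fin.lt_def]
  rw [hfilter] at hsum
  have key := sum_Iio_add_mul_le_sum_mul μ (fun α => ‖A (b α)‖ ^ 2) hμmono C hC0
    (fun _ => sq_nonneg _) hbasis ⟨ℓ, hℓN⟩
  calc (κ * (ℓ + 1) / C) * ∑ α, ‖A (b α)‖ ^ 2
      = κ * (ℓ + 1) * ((∑ α, ‖A (b α)‖ ^ 2) / C) := by ring
    _ ≤ _ := mul_le_mul_of_nonneg_right hsum (by positivity)
    _ ≤ _ := key

/-- Petersen–Wink, Lemma 1.8, inequality form: Let `𝔤 ⊂ 𝔰𝔬(V)` be a Lie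
subalgebra (modelled as a real inner product space `G` with orthonormal eigenbasis `b` of
the self-adjoint operator `R`, eigenvalues `μ₁ ≤ … ≤ μ_{dim 𝔤}`), and let `T ∈ ⊗ʳV*_ℂ`
with `A : 𝔤 → W`, `L ↦ L·T` the induced action, so that `|T^𝔤|² = ∑_α |b_α T|²` and
`g(R(T^𝔤), conj(T^𝔤)) = ∑_α μ_α |b_α T|²`.  Suppose there is `C ≥ 1` such that
`|LT|² ≤ (1/C)|T^𝔤|²|L|²` for all `L ∈ 𝔤`.  Let `1 ≤ ℓ ≤ ⌊C⌋` be an integer and `κ ≤ 0`.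
If `μ₁ + … + μ_ℓ + (C − ℓ)μ_{ℓ+1} ≥ κ(ℓ+1)`, then
`g(R(T^𝔤), conj(T^𝔤)) ≥ (κ(ℓ+1)/C)|T^𝔤|²`. -/
theorem stmt_3 {G W : Type*} [NormedAddCommGroup G] [InnerProductSpace ℝ G]
    [NormedAddCommGroup W] [InnerProductSpace ℂ W]
    {N : ℕ} (b : OrthonormalBasis (Fin N) ℝ G)
    (R : G →ₗ[ℝ] G)
    (hself : ∀ x y : G, (inner ℝ (R x) y : ℝ) = inner ℝ x (R y))
    (μ : Fin N → ℝ) (hμmono : Monotone μ)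
    (heig : ∀ α, R (b α) = μ α • b α)
    (A : G →ₗ[ℝ] W)
    (C : ℝ) (hC : 1 ≤ C)
    (hest : ∀ L : G, ‖A L‖ ^ 2 ≤ (1 / C) * (∑ α, ‖A (b α)‖ ^ 2) * ‖L‖ ^ 2)
    (ℓ : ℕ) (hℓ1 : 1 ≤ ℓ) (hℓC : (ℓ : ℝ) ≤ ⌊C⌋₊)
    (hℓN : ℓ < N)
    (κ : ℝ) (hκ : κ ≤ 0)
    (hsum : (∑ α ∈ Finset.univ.filter (fun α : Fin N => (α : ℕ) < ℓ), μ α)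
              + (C - ℓ) * μ ⟨ℓ, hℓN⟩ ≥ κ * (ℓ + 1)) :
    (∑ α, μ α * ‖A (b α)‖ ^ 2) ≥ (κ * (ℓ + 1) / C) * ∑ α, ‖A (b α)‖ ^ 2 :=
  stmt_3_general b μ hμmono A C hC hest ℓ hℓN κ hsum
end

section
/- Under the same hypotheses (|LT|² ≤ (1/C)|T^g|²|L|² for all L ∈ g, C ≥ 1, integer 1 ≤ ℓ ≤ ⌊C⌋), if μ₁ + … + μ_ℓ + (C − ℓ)μ_{ℓ+1} > 0, then g(R(T^g), conj(T^g)) > 0 unless T^g = 0. -/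
open Finset

/-! The estimate caps each weight `|b_α T|²` at `|T^𝔤|²/C`. Since the `μ_α` increase, the sum
`∑ μ_α |b_α T|²` of total weight `|T^𝔤|²` is smallest when the first `ℓ` eigenvalues carry the
maximal weight `|T^𝔤|²/C` each and the remaining weight `(C - ℓ)|T^𝔤|²/C` sits on `μ_{ℓ+1}`;
this lower bound is `|T^𝔤|²/C` times the positive quantity `μ₁ + … + μ_ℓ + (C − ℓ)μ_{ℓ+1}`. -/

theorem mul_sum_sub_add_mul_sum_le_sum_mul {ι : Type*} [Fintype ι] [DecidableEq ι]
    (μ a : ι → ℝ) (c m : ℝ) (s : Finset ι) (ha : ∀ i, 0 ≤ a i) (hac : ∀ i, a i ≤ c)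
    (hs : ∀ i ∈ s, μ i ≤ m) (hsc : ∀ i ∉ s, m ≤ μ i) :
    c * ∑ i ∈ s, (μ i - m) + m * ∑ i, a i ≤ ∑ i, μ i * a i := by
  have h_in : c * ∑ i ∈ s, (μ i - m) ≤ ∑ i ∈ s, (μ i - m) * a i := by
    rw [mul_sum]
    exact sum_le_sum fun i hi => by
      rw [mul_comm]
      exact mul_le_mul_of_nonpos_left (hac i) (sub_nonpos.2 (hs i hi))
  have h_out : 0 ≤ ∑ i ∈ sᶜ, (μ i - m) * a i :=
    sum_nonneg fun i hi => mul_nonneg (sub_nonneg.2 (hsc i (mem_compl.1 hi))) (ha i)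
  have h_split : ∑ i, μ i * a i - m * ∑ i, a i
      = ∑ i ∈ s, (μ i - m) * a i + ∑ i ∈ sᶜ, (μ i - m) * a i := by
    rw [sum_add_sum_compl, mul_sum, ← sum_sub_distrib]
    simp only [sub_mul]
  linarith

theorem Monotone.div_mul_le_sum_mul {N : ℕ} {μ : Fin N → ℝ} (hμ : Monotone μ)
    {a : Fin N → ℝ} (ha : ∀ α, 0 ≤ a α) {C : ℝ} (hC : C ≠ 0)
    (haC : ∀ α, a α ≤ (∑ β, a β) / C) {ℓ : ℕ} (hℓN : ℓ < N) :
    (∑ β, a β) / C * ((∑ α ∈ univ.filter (fun α : Fin N => (α : ℕ) < ℓ), μ α)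
      + (C - ℓ) * μ ⟨ℓ, hℓN⟩) ≤ ∑ α, μ α * a α := by
  have h_card : #(univ.filter (fun α : Fin N => (α : ℕ) < ℓ)) = ℓ := by
    rw [Fin.card_filter_val_lt, min_eq_right hℓN.le]
  have h := mul_sum_sub_add_mul_sum_le_sum_mul μ a _ (μ ⟨ℓ, hℓN⟩) _ ha haC
    (fun α hα => hμ (Fin.le_def.2 (mem_filter.1 hα).2.le))
    (fun α hα => hμ (Fin.le_def.2 (not_lt.1 fun h => hα (mem_filter.2 ⟨mem_univ α, h⟩))))
  rw [sum_sub_distrib, sum_const, h_card, nsmul_eq_mul] at h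
  convert h using 1
  field_simp
  ring

theorem stmt_4_general {G W : Type*} [NormedAddCommGroup G] [InnerProductSpace ℝ G]
    [NormedAddCommGroup W] [InnerProductSpace ℂ W]
    {N : ℕ} (b : OrthonormalBasis (Fin N) ℝ G)
    (μ : Fin N → ℝ) (hμmono : Monotone μ)
    (A : G →ₗ[ℝ] W)
    (C : ℝ) (hC : 1 ≤ C)
    (hest : ∀ L : G, ‖A L‖ ^ 2 ≤ (1 / C) * (∑ α, ‖A (b α)‖ ^ 2) * ‖L‖ ^ 2)
    (ℓ : ℕ)
    (hℓN : ℓ < N)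
    (hsum : (∑ α ∈ Finset.univ.filter (fun α : Fin N => (α : ℕ) < ℓ), μ α)
              + (C - ℓ) * μ ⟨ℓ, hℓN⟩ > 0)
    (hT : (∑ α, ‖A (b α)‖ ^ 2) ≠ 0) :
    0 < ∑ α, μ α * ‖A (b α)‖ ^ 2 := by
  have hC₀ : 0 < C := zero_lt_one.trans_le hC
  have hS : 0 < ∑ α, ‖A (b α)‖ ^ 2 :=
    (sum_nonneg fun α _ => sq_nonneg _).lt_of_ne' hT
  have h_cap : ∀ α, ‖A (b α)‖ ^ 2 ≤ (∑ β, ‖A (b β)‖ ^ 2) / C := fun α => by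
    simpa [b.orthonormal.1 α, div_eq_inv_mul] using hest (b α)
  exact (mul_pos (div_pos hS hC₀) hsum).trans_le
    (hμmono.div_mul_le_sum_mul (fun α => sq_nonneg _) hC₀.ne' h_cap hℓN)

/-- Petersen–Wink, Lemma 1.8, strict form: Under the same hypotheses as
Statement 3 (`|LT|² ≤ (1/C)|T^𝔤|²|L|²` for all `L ∈ 𝔤`, `C ≥ 1`, integer
`1 ≤ ℓ ≤ ⌊C⌋`), if `μ₁ + … + μ_ℓ + (C − ℓ)μ_{ℓ+1} > 0`, then
`g(R(T^𝔤), conj(T^𝔤)) = ∑_α μ_α |b_α T|² > 0` unless `T^𝔤 = 0`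
(i.e. unless `|T^𝔤|² = ∑_α |b_α T|²` vanishes). -/
theorem stmt_4 {G W : Type*} [NormedAddCommGroup G] [InnerProductSpace ℝ G]
    [NormedAddCommGroup W] [InnerProductSpace ℂ W]
    {N : ℕ} (b : OrthonormalBasis (Fin N) ℝ G)
    (R : G →ₗ[ℝ] G)
    (hself : ∀ x y : G, (inner ℝ (R x) y : ℝ) = inner ℝ x (R y))
    (μ : Fin N → ℝ) (hμmono : Monotone μ)
    (heig : ∀ α, R (b α) = μ α • b α)
    (A : G →ₗ[ℝ] W)
    (C : ℝ) (hC : 1 ≤ C)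
    (hest : ∀ L : G, ‖A L‖ ^ 2 ≤ (1 / C) * (∑ α, ‖A (b α)‖ ^ 2) * ‖L‖ ^ 2)
    (ℓ : ℕ) (hℓ1 : 1 ≤ ℓ) (hℓC : (ℓ : ℝ) ≤ ⌊C⌋₊)
    (hℓN : ℓ < N)
    (hsum : (∑ α ∈ Finset.univ.filter (fun α : Fin N => (α : ℕ) < ℓ), μ α)
              + (C - ℓ) * μ ⟨ℓ, hℓN⟩ > 0)
    (hT : (∑ α, ‖A (b α)‖ ^ 2) ≠ 0) :
    0 < ∑ α, μ α * ‖A (b α)‖ ^ 2 :=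
  stmt_4_general b μ hμmono A C hC hest ℓ hℓN hsum hT
end
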